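/- arXiv:1103.1918 — 5 statements merged into one kernel-verified Lean document; each statement's English description precedes it below -/
import Mathlib

section
/- Fix ε ∈ (0,1) and T > 0 with T ≥ ln(1+ε)/ε, and set t* := T − ln(1+ε)/ε. Then the piecewise function ψ satisfies the terminal value problem 1 + ψ′(t) + ε·|ψ(t) − 1| = 0 for all t ∈ [0,T], together with the terminal condition ψ(T) = 0. -/
open Real Set

/-- The piecewise function ψ from the HJB analysis of the power-law model
(case γ = 1, ρ = 0). -/
noncomputable def psi (ε T t : ℝ) : ℝ :=
  if t ≤ T - Real.log (1 + ε) / ε then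
    (Real.exp (ε * (T - t)) - (1 - ε ^ 2)) / (ε * (1 + ε))
  else
    ((1 + ε) / ε) * (1 - Real.exp (-(ε * (T - t))))

/-- ψ solves the terminal value problem 1 + ψ′(t) + ε·|ψ(t) − 1| = 0 on [0,T],
with terminal condition ψ(T) = 0. -/
theorem stmt_2 (ε T : ℝ) (hε : ε ∈ Set.Ioo (0 : ℝ) 1) (hT : 0 < T)
    (hT' : Real.log (1 + ε) / ε ≤ T) :
    (∀ t ∈ Set.Icc (0 : ℝ) T,
      HasDerivAt (psi ε T) (-(1 + ε * |psi ε T t - 1|)) t) ∧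
    psi ε T T = 0 := by
  obtain ⟨hε0, hε1⟩ := hε
  have h1ε : (0 : ℝ) < 1 + ε := by linarith
  have hεne : ε ≠ 0 := ne_of_gt hε0
  have h1εne : (1 + ε) ≠ 0 := ne_of_gt h1ε
  set f : ℝ → ℝ := fun t => (Real.exp (ε * (T - t)) - (1 - ε ^ 2)) / (ε * (1 + ε)) with hfdef
  set g : ℝ → ℝ := fun t => ((1 + ε) / ε) * (1 - Real.exp (-(ε * (T - t)))) with hgdef
  set c : ℝ := T - Real.log (1 + ε) / ε with hc
  have hpsif : ∀ s, s ≤ c → psi ε T s = f s := by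
    intro s hs; simp only [psi, hfdef]; rw [if_pos hs]
  have hpsig : ∀ s, ¬ s ≤ c → psi ε T s = g s := by
    intro s hs; simp only [psi, hgdef]; rw [if_neg hs]
  have hexpc : Real.exp (ε * (T - c)) = 1 + ε := by
    have h : ε * (T - c) = Real.log (1 + ε) := by rw [hc]; field_simp; ring
    rw [h, Real.exp_log h1ε]
  have hfc : f c = 1 := by
    simp only [hfdef]; rw [hexpc]; field_simp; ring
  have hgc : g c = 1 := by
    simp only [hgdef]; rw [Real.exp_neg, hexpc]; field_simp; ring
  -- derivative lemmas
  have hderf : ∀ t : ℝ, HasDerivAt f (-(Real.exp (ε * (T - t))) / (1 + ε)) t := by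
    intro t
    have h1 : HasDerivAt (fun t : ℝ => ε * (T - t)) (-ε) t := by
      simpa using ((hasDerivAt_id t).const_sub T).const_mul ε
    have h2 := (Real.hasDerivAt_exp (ε * (T - t))).comp t h1
    have h3 := (h2.sub_const (1 - ε ^ 2)).div_const (ε * (1 + ε))
    refine h3.congr_deriv ?_
    field_simp
  have hderg : ∀ t : ℝ, HasDerivAt g (-((1 + ε) * Real.exp (-(ε * (T - t))))) t := by
    intro t
    have h1 : HasDerivAt (fun t : ℝ => -(ε * (T - t))) ε t := by
      have h0 : HasDerivAt (fun t : ℝ => ε * (T - t)) (-ε) t := by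
        simpa using ((hasDerivAt_id t).const_sub T).const_mul ε
      exact h0.neg.congr_deriv (neg_neg ε)
    have h2 := (Real.hasDerivAt_exp (-(ε * (T - t)))).comp t h1
    have h3 := ((hasDerivAt_const t (1 : ℝ)).sub h2).const_mul ((1 + ε) / ε)
    refine h3.congr_deriv ?_
    field_simp; ring
  -- inequalities
  have hflb : ∀ t : ℝ, t ≤ c → 1 + ε ≤ Real.exp (ε * (T - t)) := by
    intro t ht
    rw [← hexpc]
    exact Real.exp_le_exp.mpr (by nlinarith)
  have hglb : ∀ t : ℝ, c ≤ t → (1 + ε)⁻¹ ≤ Real.exp (-(ε * (T - t))) := by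
    intro t ht
    have h : (1 + ε)⁻¹ = Real.exp (-(ε * (T - c))) := by rw [Real.exp_neg, hexpc]
    rw [h]
    exact Real.exp_le_exp.mpr (by nlinarith)
  -- value matching for the derivative formula
  have hvalf : ∀ t : ℝ, t ≤ c → -(1 + ε * |f t - 1|) = -(Real.exp (ε * (T - t))) / (1 + ε) := by
    intro t ht
    have h1 := hflb t ht
    have hnn : 0 ≤ f t - 1 := by
      simp only [hfdef]
      rw [sub_nonneg, le_div_iff₀ (by positivity)]
      nlinarith
    rw [abs_of_nonneg hnn]
    simp only [hfdef]
    field_simp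
    ring
  have hvalg : ∀ t : ℝ, c ≤ t → -(1 + ε * |g t - 1|) = -((1 + ε) * Real.exp (-(ε * (T - t)))) := by
    intro t ht
    have h1 := hglb t ht
    have h2 : (1 : ℝ) ≤ (1 + ε) * Real.exp (-(ε * (T - t))) := by
      have := mul_le_mul_of_nonneg_left h1 (le_of_lt h1ε)
      rwa [mul_inv_cancel₀ h1εne] at this
    have hnp : g t - 1 ≤ 0 := by
      simp only [hgdef]
      rw [sub_nonpos, div_mul_eq_mul_div, div_le_iff₀ hε0]
      nlinarith
    rw [abs_of_nonpos hnp]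
    simp only [hgdef]
    field_simp
    ring
  constructor
  · intro t _
    rcases lt_trichotomy t c with hlt | heq | hgt
    · -- left region
      have hev : psi ε T =ᶠ[nhds t] f := by
        filter_upwards [Iio_mem_nhds hlt] with s hs
        exact hpsif s (le_of_lt hs)
      have := (hderf t).congr_of_eventuallyEq hev
      rw [hpsif t (le_of_lt hlt), hvalf t (le_of_lt hlt)]
      exact this
    · -- junction point
      subst heq
      have hpsit : psi ε T c = 1 := by rw [hpsif c le_rfl, hfc]
      have hdL : HasDerivWithinAt (psi ε T) (-1 : ℝ) (Iic c) c := by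
        have h := (hderf c).hasDerivWithinAt (s := Iic c)
        have h' : (-(Real.exp (ε * (T - c))) / (1 + ε)) = -1 := by
          rw [hexpc]; field_simp
        rw [h'] at h
        exact h.congr (fun s hs => (hpsif s hs).symm ▸ rfl) (by rw [hpsif c le_rfl])
      have hdR : HasDerivWithinAt (psi ε T) (-1 : ℝ) (Ici c) c := by
        have h := (hderg c).hasDerivWithinAt (s := Ici c)
        have h' : (-((1 + ε) * Real.exp (-(ε * (T - c))))) = -1 := by
          rw [Real.exp_neg, hexpc]; field_simp
        rw [h'] at h
        refine h.congr (fun s hs => ?_) (by rw [hpsif c le_rfl, hfc, hgc])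
        rcases eq_or_lt_of_le (Set.mem_Ici.mp hs) with h1 | h1
        · rw [← h1, hpsif c le_rfl, hfc, hgc]
        · rw [hpsig s (not_le.mpr h1)]
      have hfinal : HasDerivAt (psi ε T) (-1 : ℝ) c := by
        have h2 := hdL.union hdR
        rw [Iic_union_Ici] at h2
        exact h2.hasDerivAt (by simp)
      rw [hpsit]
      simpa using hfinal
    · -- right region
      have hev : psi ε T =ᶠ[nhds t] g := by
        filter_upwards [Ioi_mem_nhds hgt] with s hs
        exact hpsig s (not_le.mpr hs)
      have := (hderg t).congr_of_eventuallyEq hev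
      rw [hpsig t (not_le.mpr hgt), hvalg t (le_of_lt hgt)]
      exact this
  · -- terminal condition
    have hlog : 0 < Real.log (1 + ε) := Real.log_pos (by linarith)
    have hcT : c < T := by
      rw [hc]; have : 0 < Real.log (1 + ε) / ε := div_pos hlog hε0; linarith
    rw [hpsig T (not_le.mpr hcT)]
    simp [hgdef]
end

section
/- Fix ε ∈ (0,1) and T > 0 with T > ln(1+ε)/ε, and set t* := T − ln(1+ε)/ε. Then the piecewise function ψ satisfies ψ(t) > 1 for all t ∈ [0, t*), ψ(t*) = 1, and ψ(t) < 1 for all t ∈ (t*, T]. Consequently the control μ(t) := ε·sgn(ψ(t) − 1) equals ε on [0, t*) and equals −ε on (t*, T], i.e., it switches exactly once, at time t*. -/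
open Real Set

/-- ψ > 1 strictly before the switching time t*, ψ(t*) = 1, and ψ < 1 strictly
after it; hence the control μ(t) = ε·sgn(ψ(t) − 1) equals ε on [0,t*) and −ε on
(t*,T], switching exactly once, at t*. -/
theorem stmt_3 (ε T : ℝ) (hε : ε ∈ Set.Ioo (0 : ℝ) 1) (hT : 0 < T)
    (hT' : Real.log (1 + ε) / ε < T) :
    (∀ t ∈ Set.Ico (0 : ℝ) (T - Real.log (1 + ε) / ε), 1 < psi ε T t) ∧
    psi ε T (T - Real.log (1 + ε) / ε) = 1 ∧
    (∀ t ∈ Set.Ioc (T - Real.log (1 + ε) / ε) T, psi ε T t < 1) ∧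
    (∀ t ∈ Set.Ico (0 : ℝ) (T - Real.log (1 + ε) / ε),
      ε * Real.sign (psi ε T t - 1) = ε) ∧
    (∀ t ∈ Set.Ioc (T - Real.log (1 + ε) / ε) T,
      ε * Real.sign (psi ε T t - 1) = -ε) := by
  obtain ⟨hε0, hε1⟩ := hε
  have h1ε : (0:ℝ) < 1 + ε := by linarith
  have hlog : Real.exp (Real.log (1 + ε)) = 1 + ε := Real.exp_log h1ε
  have hden : (0:ℝ) < ε * (1 + ε) := by positivity
  -- part 1
  have h1 : ∀ t ∈ Set.Ico (0 : ℝ) (T - Real.log (1 + ε) / ε), 1 < psi ε T t := by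
    intro t ht
    have hle : t ≤ T - Real.log (1 + ε) / ε := le_of_lt ht.2
    rw [psi, if_pos hle]
    rw [lt_div_iff₀ hden]
    have harg : Real.log (1 + ε) < ε * (T - t) := by
      have : Real.log (1 + ε) / ε < T - t := by linarith [ht.2]
      calc Real.log (1 + ε) = ε * (Real.log (1 + ε) / ε) := by field_simp
        _ < ε * (T - t) := by exact (mul_lt_mul_iff_right₀ hε0).mpr this
    have := Real.exp_lt_exp.mpr harg
    rw [hlog] at this
    nlinarith
  -- part 2
  have h2 : psi ε T (T - Real.log (1 + ε) / ε) = 1 := by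
    rw [psi, if_pos le_rfl]
    have : ε * (T - (T - Real.log (1 + ε) / ε)) = Real.log (1 + ε) := by
      field_simp
      ring
    rw [this, hlog]
    field_simp
    ring
  -- part 3
  have h3 : ∀ t ∈ Set.Ioc (T - Real.log (1 + ε) / ε) T, psi ε T t < 1 := by
    intro t ht
    have hgt : ¬ t ≤ T - Real.log (1 + ε) / ε := not_le.mpr ht.1
    rw [psi, if_neg hgt]
    have harg : -(ε * (T - t)) > -Real.log (1 + ε) := by
      have h' : T - t < Real.log (1 + ε) / ε := by linarith [ht.1]
      have : ε * (T - t) < Real.log (1 + ε) := by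
        calc ε * (T - t) < ε * (Real.log (1 + ε) / ε) := (mul_lt_mul_iff_right₀ hε0).mpr h'
          _ = Real.log (1 + ε) := by field_simp
      linarith
    have hexp : Real.exp (-Real.log (1 + ε)) < Real.exp (-(ε * (T - t))) :=
      Real.exp_lt_exp.mpr harg
    have hval : Real.exp (-Real.log (1 + ε)) = 1 / (1 + ε) := by
      rw [Real.exp_neg, hlog]; ring
    rw [hval] at hexp
    have hεne : ε ≠ 0 := ne_of_gt hε0
    have h1εne : (1:ℝ) + ε ≠ 0 := ne_of_gt h1ε
    rw [div_mul_eq_mul_div, div_lt_one hε0]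
    have : 1 - Real.exp (-(ε * (T - t))) < 1 - 1 / (1 + ε) := by linarith
    calc (1 + ε) * (1 - Real.exp (-(ε * (T - t)))) < (1 + ε) * (1 - 1 / (1 + ε)) :=
          (mul_lt_mul_iff_right₀ h1ε).mpr this
      _ = ε := by field_simp; ring
  refine ⟨h1, h2, h3, ?_, ?_⟩
  · intro t ht
    have := h1 t ht
    rw [Real.sign_of_pos (by linarith : (0:ℝ) < psi ε T t - 1), mul_one]
  · intro t ht
    have := h3 t ht
    rw [Real.sign_of_neg (by linarith : psi ε T t - 1 < 0)]
    ring
end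

section
/- Fix ε ∈ (0,1) and T > 0 with T ≥ ln(1+ε)/ε, and set t* := T − ln(1+ε)/ε. If φ : [0,T] → ℝ is any continuously differentiable function satisfying 1 + φ′(t) + ε·|φ(t) − 1| = 0 on [0,T] with φ(T) = 0, then φ coincides with the piecewise function ψ on [0,T]. -/
open Real Set

lemma psi_hasDeriv (ε T : ℝ) (hε : ε ∈ Set.Ioo (0 : ℝ) 1) :
    ∀ t ∈ Set.Icc (0 : ℝ) T,
      HasDerivWithinAt (psi ε T) (-(1 + ε * |psi ε T t - 1|)) (Set.Icc (0 : ℝ) T) t := by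
  obtain ⟨hε0, hε1⟩ := hε
  have h1ε : (0:ℝ) < 1 + ε := by linarith
  set ts : ℝ := T - Real.log (1 + ε) / ε with hts
  have hexp_star : Real.exp (ε * (T - ts)) = 1 + ε := by
    have h1 : ε * (T - ts) = Real.log (1 + ε) := by
      rw [hts]; field_simp; ring
    rw [h1, Real.exp_log h1ε]
  set f₁ : ℝ → ℝ := fun t => (Real.exp (ε * (T - t)) - (1 - ε ^ 2)) / (ε * (1 + ε)) with hf₁
  set f₂ : ℝ → ℝ := fun t => ((1 + ε) / ε) * (1 - Real.exp (-(ε * (T - t)))) with hf₂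
  have hpsi1 : ∀ t, t ≤ ts → psi ε T t = f₁ t := fun t h => if_pos h
  have hpsi2 : ∀ t, ts < t → psi ε T t = f₂ t := fun t h => if_neg (not_le.mpr h)
  have hf₁s : f₁ ts = 1 := by
    rw [hf₁]; simp only; rw [hexp_star]; field_simp; ring
  have hf₂s : f₂ ts = 1 := by
    rw [hf₂]; simp only
    rw [Real.exp_neg, hexp_star]
    field_simp
    ring
  have hd1 : ∀ t : ℝ, HasDerivAt f₁ (-(Real.exp (ε * (T - t)) / (1 + ε))) t := by
    intro t
    have h : HasDerivAt (fun t : ℝ => ε * (T - t)) (-ε) t := by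
      simpa using ((hasDerivAt_id t).const_sub T).const_mul ε
    have := (h.exp.sub_const (1 - ε ^ 2)).div_const (ε * (1 + ε))
    refine this.congr_deriv ?_
    field_simp
  have hd2 : ∀ t : ℝ, HasDerivAt f₂ (-((1 + ε) * Real.exp (-(ε * (T - t))))) t := by
    intro t
    have h : HasDerivAt (fun t : ℝ => -(ε * (T - t))) ε t := by
      have h0 := (((hasDerivAt_id t).const_sub T).const_mul ε).neg
      simp only [id, mul_neg, mul_one, neg_neg] at h0
      exact h0
    have := ((h.exp.const_sub 1)).const_mul ((1 + ε) / ε)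
    refine this.congr_deriv ?_
    field_simp
  -- value identities
  have hval1 : ∀ t, t ≤ ts →
      -(1 + ε * |psi ε T t - 1|) = -(Real.exp (ε * (T - t)) / (1 + ε)) := by
    intro t h
    have hle : 1 + ε ≤ Real.exp (ε * (T - t)) := by
      rw [← hexp_star]
      exact Real.exp_le_exp.mpr (by nlinarith)
    have h1 : (1:ℝ) ≤ f₁ t := by
      rw [hf₁]; simp only
      rw [le_div_iff₀ (by positivity)]
      nlinarith
    rw [hpsi1 t h, abs_of_nonneg (by linarith)]
    rw [hf₁]; simp only
    field_simp
    ring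
  have hval2 : ∀ t, ts ≤ t →
      -(1 + ε * |f₂ t - 1|) = -((1 + ε) * Real.exp (-(ε * (T - t)))) := by
    intro t h
    have hle : Real.exp (-(ε * (T - ts))) ≤ Real.exp (-(ε * (T - t))) :=
      Real.exp_le_exp.mpr (by nlinarith)
    have hs : Real.exp (-(ε * (T - ts))) = (1 + ε)⁻¹ := by
      rw [Real.exp_neg, hexp_star]
    have h1 : f₂ t ≤ 1 := by
      rw [hf₂]; simp only
      rw [hs] at hle
      rw [mul_comm, ← le_div_iff₀ (by positivity)]
      have : (1:ℝ) - Real.exp (-(ε * (T - t))) ≤ 1 - (1 + ε)⁻¹ := by linarith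
      refine this.trans (le_of_eq ?_)
      field_simp
      ring
    rw [abs_of_nonpos (by linarith), hf₂]; simp only
    field_simp
    ring
  intro t ht
  rcases lt_trichotomy t ts with h | h | h
  · -- t < ts : psi agrees with f₁ near t
    have hev : psi ε T =ᶠ[nhds t] f₁ := by
      filter_upwards [Iio_mem_nhds h] with s hs
      exact hpsi1 s (le_of_lt hs)
    rw [hval1 t h.le]
    exact ((hd1 t).congr_of_eventuallyEq hev).hasDerivWithinAt
  · -- t = ts
    have hpsis : psi ε T ts = 1 := by rw [hpsi1 ts le_rfl, hf₁s]
    have hA : HasDerivWithinAt (psi ε T) (-1) (Iic ts) ts := by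
      have hd := ((hd1 ts).hasDerivWithinAt (s := Iic ts)).congr
        (fun s hs => hpsi1 s hs) (hpsi1 ts le_rfl)
      refine hd.congr_deriv ?_
      rw [hexp_star]; field_simp
    have hB : HasDerivWithinAt (psi ε T) (-1) (Ici ts) ts := by
      have heq : ∀ s ∈ Ici ts, psi ε T s = f₂ s := by
        intro s hs
        rcases eq_or_lt_of_le (show ts ≤ s from hs) with rfl | hlt
        · rw [hpsi1 _ le_rfl, hf₁s, hf₂s]
        · exact hpsi2 s hlt
      have hd := ((hd2 ts).hasDerivWithinAt (s := Ici ts)).congr heq (heq ts self_mem_Ici)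
      refine hd.congr_deriv ?_
      rw [Real.exp_neg, hexp_star]; field_simp
    have hC : HasDerivWithinAt (psi ε T) (-1) (Icc 0 T) ts :=
      (hA.union hB).mono (fun s _ => le_total s ts)
    rw [h, hpsis]
    simpa using hC
  · -- t > ts
    have hev : psi ε T =ᶠ[nhds t] f₂ := by
      filter_upwards [Ioi_mem_nhds h] with s hs
      exact hpsi2 s hs
    rw [hpsi2 t h, hval2 t h.le]
    exact ((hd2 t).congr_of_eventuallyEq hev).hasDerivWithinAt

/-- Uniqueness: any continuously differentiable solution φ of the terminal value
problem 1 + φ′(t) + ε·|φ(t) − 1| = 0 on [0,T], φ(T) = 0, coincides with the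
piecewise function ψ on [0,T]. -/
theorem stmt_5 (ε T : ℝ) (hε : ε ∈ Set.Ioo (0 : ℝ) 1) (hT : 0 < T)
    (hT' : Real.log (1 + ε) / ε ≤ T) (φ : ℝ → ℝ)
    (hφ : ∀ t ∈ Set.Icc (0 : ℝ) T,
      HasDerivWithinAt φ (-(1 + ε * |φ t - 1|)) (Set.Icc (0 : ℝ) T) t)
    (hφT : φ T = 0) :
    ∀ t ∈ Set.Icc (0 : ℝ) T, φ t = psi ε T t := by
  obtain ⟨hε0, hε1⟩ := hε
  have h1ε : (0:ℝ) < 1 + ε := by linarith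
  have hψ := psi_hasDeriv ε T ⟨hε0, hε1⟩
  set v : ℝ → ℝ → ℝ := fun _ x => -(1 + ε * |x - 1|) with hv_def
  have hK : (0:ℝ) ≤ ε := hε0.le
  have hv : ∀ t, LipschitzOnWith ⟨ε, hK⟩ (v t) univ := by
    intro t
    apply LipschitzWith.lipschitzOnWith
    apply LipschitzWith.of_dist_le_mul
    intro x y
    simp only [hv_def, Real.dist_eq]
    have h1 : -(1 + ε * |x - 1|) - -(1 + ε * |y - 1|) = ε * (|y - 1| - |x - 1|) := by ring
    rw [h1, abs_mul, abs_of_nonneg hK]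
    have h2 : |(|y - 1| - |x - 1|)| ≤ |x - y| := by
      have := abs_abs_sub_abs_le_abs_sub (y - 1) (x - 1)
      rw [show y - 1 - (x - 1) = -(x - y) by ring, abs_neg] at this
      exact this
    show ε * |(|y - 1| - |x - 1|)| ≤ ε * |x - y|
    nlinarith [abs_nonneg (x - y)]

  have key : ∀ (f : ℝ → ℝ),
      (∀ t ∈ Set.Icc (0 : ℝ) T, HasDerivWithinAt f (-(1 + ε * |f t - 1|)) (Set.Icc (0:ℝ) T) t) →
      ∀ t ∈ Set.Ioc (0 : ℝ) T, HasDerivWithinAt f (v t (f t)) (Iic t) t := by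
    intro f hf t ht
    have h := hf t ⟨ht.1.le, ht.2⟩
    refine h.mono_of_mem_nhdsWithin ?_
    have h1 : Ioi (0:ℝ) ∈ nhds t := Ioi_mem_nhds ht.1
    refine Filter.mem_of_superset (inter_mem_nhdsWithin (Iic t) h1) ?_
    rintro x ⟨hx1, hx2⟩
    exact ⟨le_of_lt hx2, le_trans hx1 ht.2⟩
  have hψT : psi ε T T = 0 := by
    have hlog : 0 < Real.log (1 + ε) := Real.log_pos (by linarith)
    have : ¬ T ≤ T - Real.log (1 + ε) / ε := by
      intro hc
      have : 0 < Real.log (1 + ε) / ε := div_pos hlog hε0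
      linarith
    rw [psi, if_neg this]
    simp
  have hcontφ : ContinuousOn φ (Icc 0 T) := fun t ht => (hφ t ht).continuousWithinAt
  have hcontψ : ContinuousOn (psi ε T) (Icc 0 T) := fun t ht => (hψ t ht).continuousWithinAt
  exact ODE_solution_unique_of_mem_Icc_left (fun t _ => hv t) hcontφ (key φ hφ) (fun _ _ => mem_univ _)
    hcontψ (key (psi ε T) hψ) (fun _ _ => mem_univ _) (by rw [hφT, hψT])
end

section
/- Fix ε ∈ (0,1) and R > 0, and set t₁ := 1 − ln(1+ε)/ε. Then f(R,1) < f(R,0) < f(R,t₁). Explicitly, R·(1−ε)(e^ε − 1)/ε < R·(1+ε)(1 − e^{−ε})/ε < R·(e^ε + ε² − 1)/(ε(1+ε)). -/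
open Real Set

/-- The one-switch expected payoff f(R,t) for the power-law model with
h(R) = R, horizon T = 1, switching the control from +ε to −ε at time t. -/
noncomputable def f (ε R t : ℝ) : ℝ :=
  R * (((1 - ε) / ε) * (Real.exp (ε * t) - 1) +
       ((1 + ε) / ε) * (Real.exp (ε * t) - Real.exp (2 * ε * t - ε)))

/-- The chain of inequalities f(R,1) < f(R,0) < f(R,t₁), with the explicit
closed forms of the three values. -/
theorem stmt_12 (ε R : ℝ) (hε : ε ∈ Set.Ioo (0 : ℝ) 1) (hR : 0 < R) :
    f ε R 1 < f ε R 0 ∧ f ε R 0 < f ε R (1 - Real.log (1 + ε) / ε) ∧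
    R * (1 - ε) * (Real.exp ε - 1) / ε < R * (1 + ε) * (1 - Real.exp (-ε)) / ε ∧
    R * (1 + ε) * (1 - Real.exp (-ε)) / ε <
      R * (Real.exp ε + ε ^ 2 - 1) / (ε * (1 + ε)) := by
  obtain ⟨hε0, hε1⟩ := hε
  have hεne : ε ≠ 0 := ne_of_gt hε0
  have h1ε : (0:ℝ) < 1 + ε := by linarith
  set E := Real.exp ε with hE
  have hEpos : 0 < E := Real.exp_pos ε
  have hE1 : 1 + ε < E := by
    have := Real.add_one_lt_exp hεne; linarith
  have hprod : Real.exp (-ε) * E = 1 := by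
    rw [hE, ← Real.exp_add]; norm_num
  have hEinv : Real.exp (-ε) = 1 / E := by
    field_simp; linarith [hprod]
  have hE2 : 1 - ε < Real.exp (-ε) := by
    have := Real.add_one_lt_exp (neg_ne_zero.mpr hεne); linarith
  have hsmall : (1 - ε) * E < 1 := by
    have := mul_lt_mul_of_pos_right hE2 hEpos
    rw [hprod] at this; linarith
  -- closed forms
  have hf1 : f ε R 1 = R * (1 - ε) * (Real.exp ε - 1) / ε := by
    unfold f
    have h2 : 2 * ε * 1 - ε = ε := by ring
    rw [mul_one, h2]
    ring
  have hf0 : f ε R 0 = R * (1 + ε) * (1 - Real.exp (-ε)) / ε := by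
    unfold f
    have h2 : 2 * ε * 0 - ε = -ε := by ring
    rw [mul_zero, h2, Real.exp_zero]
    ring
  have hfa : ε * (1 - Real.log (1 + ε) / ε) = ε - Real.log (1 + ε) := by
    field_simp
  have hfb : 2 * ε * (1 - Real.log (1 + ε) / ε) - ε
      = ε - (Real.log (1 + ε) + Real.log (1 + ε)) := by
    field_simp; ring
  have hft : f ε R (1 - Real.log (1 + ε) / ε)
      = R * (Real.exp ε + ε ^ 2 - 1) / (ε * (1 + ε)) := by
    unfold f
    rw [hfa, hfb, Real.exp_sub, Real.exp_sub, Real.exp_add, Real.exp_log h1ε]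
    field_simp
    ring
  -- key inequalities
  have keyA : (1 - ε) * (E - 1) * E < (1 + ε) * (E - 1) := by
    nlinarith [mul_lt_mul_of_pos_right hsmall (show (0:ℝ) < E - 1 by linarith)]
  have keyB : (1 + ε) ^ 2 * (E - 1) < (E + ε ^ 2 - 1) * E := by
    nlinarith [mul_pos (sub_pos.mpr hE1) (sub_pos.mpr hE1)]
  have hA : R * (1 - ε) * (Real.exp ε - 1) / ε < R * (1 + ε) * (1 - Real.exp (-ε)) / ε := by
    rw [hEinv, ← hE]
    have e1 : R * (1 + ε) * (1 - 1 / E) / ε = R * ((1 + ε) * (E - 1)) / (ε * E) := by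
      field_simp
    have e2 : R * (1 - ε) * (E - 1) / ε = R * ((1 - ε) * (E - 1) * E) / (ε * E) := by
      field_simp
    rw [e1, e2]
    have hd : (0:ℝ) < ε * E := by positivity
    exact (div_lt_div_iff_of_pos_right hd).mpr (mul_lt_mul_of_pos_left keyA hR)
  have hB : R * (1 + ε) * (1 - Real.exp (-ε)) / ε <
      R * (Real.exp ε + ε ^ 2 - 1) / (ε * (1 + ε)) := by
    rw [hEinv, ← hE]
    have e3 : R * (1 + ε) * (1 - 1 / E) / ε
        = R * ((1 + ε) ^ 2 * (E - 1)) / (ε * (1 + ε) * E) := by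
      field_simp
    have e4 : R * (E + ε ^ 2 - 1) / (ε * (1 + ε))
        = R * ((E + ε ^ 2 - 1) * E) / (ε * (1 + ε) * E) := by
      field_simp
    rw [e3, e4]
    have hd : (0:ℝ) < ε * (1 + ε) * E := by positivity
    exact (div_lt_div_iff_of_pos_right hd).mpr (mul_lt_mul_of_pos_left keyB hR)
  refine ⟨?_, ?_, hA, hB⟩
  · rw [hf1, hf0]; exact hA
  · rw [hf0, hft]; exact hB
end

section
/- Fix ε ∈ (0,1) and R > 0, and set t₁ := 1 − ln(1+ε)/ε. Then t₁ is the unique maximizer of t ↦ f(R,t) over [0,1]; that is, f(R,t) < f(R,t₁) for all t ∈ [0,1] with t ≠ t₁, and hence sup_{0 ≤ s ≤ 1} f(R,s) = f(R,t₁) = R·(e^ε + ε² − 1)/(ε(1+ε)). -/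
open Real Set

lemma key (ε R t : ℝ) (hε : 0 < ε) (hε1 : ε < 1) :
    f ε R t = f ε R (1 - Real.log (1 + ε) / ε)
      - R * (1 + ε) * Real.exp (-ε) / ε * (Real.exp (ε * t) - Real.exp ε / (1 + ε)) ^ 2 := by
  have h1 : (0:ℝ) < 1 + ε := by linarith
  have ht1 : ε * (1 - Real.log (1 + ε) / ε) = ε - Real.log (1 + ε) := by
    field_simp
  have he1 : Real.exp (ε * (1 - Real.log (1 + ε) / ε)) = Real.exp ε / (1 + ε) := by
    rw [ht1, Real.exp_sub, Real.exp_log h1]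
  have he2 : Real.exp (2 * ε * (1 - Real.log (1 + ε) / ε) - ε)
      = (Real.exp ε / (1 + ε)) ^ 2 * Real.exp (-ε) := by
    have : 2 * ε * (1 - Real.log (1 + ε) / ε) - ε
        = (ε * (1 - Real.log (1 + ε) / ε)) + (ε * (1 - Real.log (1 + ε) / ε)) + (-ε) := by ring
    rw [this, Real.exp_add, Real.exp_add, he1]; ring
  have he3 : Real.exp (2 * ε * t - ε) = Real.exp (ε * t) ^ 2 * Real.exp (-ε) := by
    have : 2 * ε * t - ε = ε * t + ε * t + (-ε) := by ring
    rw [this, Real.exp_add, Real.exp_add]; ring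
  have hne : Real.exp ε ≠ 0 := (Real.exp_pos ε).ne'
  have hεne : ε ≠ 0 := hε.ne'
  have h1ne : (1:ℝ) + ε ≠ 0 := h1.ne'
  rw [f, f, he1, he2, he3, Real.exp_neg]
  field_simp
  ring

/-- t₁ = 1 − ln(1+ε)/ε is the unique maximizer of t ↦ f(R,t) over [0,1], and
the supremum of f(R,·) over [0,1] equals f(R,t₁) = R·(e^ε + ε² − 1)/(ε(1+ε)). -/
theorem stmt_13 (ε R : ℝ) (hε : ε ∈ Set.Ioo (0 : ℝ) 1) (hR : 0 < R) :
    (∀ t ∈ Set.Icc (0 : ℝ) 1, t ≠ 1 - Real.log (1 + ε) / ε →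
      f ε R t < f ε R (1 - Real.log (1 + ε) / ε)) ∧
    sSup (f ε R '' Set.Icc (0 : ℝ) 1) = f ε R (1 - Real.log (1 + ε) / ε) ∧
    f ε R (1 - Real.log (1 + ε) / ε) =
      R * (Real.exp ε + ε ^ 2 - 1) / (ε * (1 + ε)) := by
  obtain ⟨hε0, hε1⟩ := hε
  have h1 : (0:ℝ) < 1 + ε := by linarith
  set t₁ := 1 - Real.log (1 + ε) / ε with ht₁
  have he1 : Real.exp (ε * t₁) = Real.exp ε / (1 + ε) := by
    have : ε * t₁ = ε - Real.log (1 + ε) := by rw [ht₁]; field_simp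
    rw [this, Real.exp_sub, Real.exp_log h1]
  have hstrict : ∀ t, t ≠ t₁ → f ε R t < f ε R t₁ := by
    intro t ht
    rw [key ε R t hε0 hε1]
    have hne : Real.exp (ε * t) - Real.exp ε / (1 + ε) ≠ 0 := by
      rw [← he1, sub_ne_zero]
      intro h
      exact ht (mul_left_cancel₀ hε0.ne' (Real.exp_injective h))
    have hpos : 0 < R * (1 + ε) * Real.exp (-ε) / ε
        * (Real.exp (ε * t) - Real.exp ε / (1 + ε)) ^ 2 := by
      apply mul_pos
      · positivity
      · positivity
    linarith
  have ht₁mem : t₁ ∈ Set.Icc (0:ℝ) 1 := by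
    constructor
    · rw [ht₁, sub_nonneg, div_le_one hε0]
      calc Real.log (1 + ε) ≤ 1 + ε - 1 := by
            have := Real.log_le_sub_one_of_pos h1; linarith
        _ = ε := by ring
    · rw [ht₁]
      have : 0 ≤ Real.log (1 + ε) := Real.log_nonneg (by linarith)
      have : 0 ≤ Real.log (1 + ε) / ε := div_nonneg this hε0.le
      linarith
  refine ⟨fun t _ ht => hstrict t ht, ?_, ?_⟩
  · apply IsGreatest.csSup_eq
    constructor
    · exact ⟨t₁, ht₁mem, rfl⟩
    · rintro y ⟨t, _, rfl⟩
      rcases eq_or_ne t t₁ with h | h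
      · rw [h]
      · exact (hstrict t h).le
  · rw [f, he1]
    have he2 : Real.exp (2 * ε * t₁ - ε) = (Real.exp ε / (1 + ε)) ^ 2 * Real.exp (-ε) := by
      have : 2 * ε * t₁ - ε = ε * t₁ + ε * t₁ + (-ε) := by ring
      rw [this, Real.exp_add, Real.exp_add, he1]; ring
    rw [he2, Real.exp_neg]
    have hne : Real.exp ε ≠ 0 := (Real.exp_pos ε).ne'
    field_simp
    ring
end
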